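/- Under assumption (ii) (Z is independent of the pair (Y(x_0), Y(x_1)); no potential treatments X(z) are assumed to exist), for every z ∈ {1,…,K}, every i, y, ỹ ∈ {0,1}, both inequalities hold: P(Y(x_i) = y) ≤ P(Y = y, X = i | Z = z) + P(X = 1−i | Z = z), and P(Y(x_0) = y, Y(x_1) = ỹ) ≤ P(Y = y, X = 0 | Z = z) + P(Y = ỹ, X = 1 | Z = z). -/
import Mathlib


open MeasureTheory ProbabilityTheory

/-- Under assumption (ii) (`Z` is independent of the pair `(Y(x₀), Y(x₁))`;
no potential treatments `X(z)` are assumed to exist), for every `z ∈ {1,…,K}` and all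
`i, y, ỹ ∈ {0,1}`, both inequalities hold:
`P(Y(xᵢ) = y) ≤ P(Y = y, X = i | Z = z) + P(X = 1−i | Z = z)`, and
`P(Y(x₀) = y, Y(x₁) = ỹ) ≤ P(Y = y, X = 0 | Z = z) + P(Y = ỹ, X = 1 | Z = z)`. -/
theorem stmt2
    {Ω : Type*} [MeasurableSpace Ω] (P : Measure Ω) [IsProbabilityMeasure P]
    (K : ℕ) (hK : 1 ≤ K)
    (Z : Ω → Fin K) (X : Ω → Fin 2) (Y0 Y1 : Ω → Fin 2)
    (hZ : Measurable Z) (hXm : Measurable X)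
    (hY0 : Measurable Y0) (hY1 : Measurable Y1)
    (Y : Ω → Fin 2) (hY : ∀ ω, Y ω = if X ω = 0 then Y0 ω else Y1 ω)
    (hpos : ∀ z, 0 < P (Z ⁻¹' {z}))
    (hindep : IndepFun Z (fun ω => (Y0 ω, Y1 ω)) P) :
    ∀ (z : Fin K) (i y ytilde : Fin 2),
      ((P {ω | (if i = 0 then Y0 ω else Y1 ω) = y}).toReal ≤
        (P[|Z ⁻¹' {z}] {ω | Y ω = y ∧ X ω = i}).toReal +
          (P[|Z ⁻¹' {z}] {ω | X ω = 1 - i}).toReal) ∧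
      ((P {ω | Y0 ω = y ∧ Y1 ω = ytilde}).toReal ≤
        (P[|Z ⁻¹' {z}] {ω | Y ω = y ∧ X ω = 0}).toReal +
          (P[|Z ⁻¹' {z}] {ω | Y ω = ytilde ∧ X ω = 1}).toReal) := by

  intro z i y ytilde
  have hsm : MeasurableSet (Z ⁻¹' {z}) := hZ (measurableSet_singleton z)
  have hs0 : P (Z ⁻¹' {z}) ≠ 0 := (hpos z).ne'
  haveI : IsProbabilityMeasure (P[|Z ⁻¹' {z}]) := cond_isProbabilityMeasure hs0
  have key : ∀ T : Set (Fin 2 × Fin 2),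
      P[|Z ⁻¹' {z}] ((fun ω => (Y0 ω, Y1 ω)) ⁻¹' T) =
        P ((fun ω => (Y0 ω, Y1 ω)) ⁻¹' T) := by
    intro T
    have hT : MeasurableSet T := (Set.to_countable T).measurableSet
    rw [cond_apply hsm,
      hindep.measure_inter_preimage_eq_mul _ _ (measurableSet_singleton z) hT,
      ← mul_assoc, ENNReal.inv_mul_cancel hs0 (measure_ne_top P _), one_mul]
  have htwo : ∀ a : Fin 2, a = 0 ∨ a = 1 := by decide
  have toReal_step : ∀ (A B C : Set Ω), A ⊆ B ∪ C →
      ((P[|Z ⁻¹' {z}]) A).toReal ≤ ((P[|Z ⁻¹' {z}]) B).toReal + ((P[|Z ⁻¹' {z}]) C).toReal := by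
    intro A B C hsub
    have h1 : (P[|Z ⁻¹' {z}]) A ≤ (P[|Z ⁻¹' {z}]) B + (P[|Z ⁻¹' {z}]) C :=
      le_trans (measure_mono hsub) (measure_union_le B C)
    rw [← ENNReal.toReal_add (measure_ne_top _ B) (measure_ne_top _ C)]
    exact ENNReal.toReal_mono
      (ENNReal.add_ne_top.2 ⟨measure_ne_top _ B, measure_ne_top _ C⟩) h1
  constructor
  · have e2 : ((fun ω => (Y0 ω, Y1 ω)) ⁻¹' {p | (if i = 0 then p.1 else p.2) = y}) =
        {ω | (if i = 0 then Y0 ω else Y1 ω) = y} := by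
      ext ω; by_cases hi : i = 0 <;> simp [hi]
    rw [show P {ω | (if i = 0 then Y0 ω else Y1 ω) = y} =
        P[|Z ⁻¹' {z}] {ω | (if i = 0 then Y0 ω else Y1 ω) = y} by rw [← e2, key]]
    apply toReal_step
    intro ω hω
    simp only [Set.mem_setOf_eq] at hω
    by_cases hx : X ω = i
    · left
      refine ⟨?_, hx⟩
      rcases htwo i with hi | hi <;> subst hi
      · rw [hY ω, if_pos hx]; simpa using hω
      · rw [hY ω, if_neg (by rw [hx]; decide)]; simpa using hω
    · right
      show X ω = 1 - i
      rcases htwo i with hi | hi <;> rcases htwo (X ω) with hx' | hx' <;>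
        simp_all <;> decide
  · have e2 : ((fun ω => (Y0 ω, Y1 ω)) ⁻¹' {p | p.1 = y ∧ p.2 = ytilde}) =
        {ω | Y0 ω = y ∧ Y1 ω = ytilde} := by ext ω; simp
    rw [show P {ω | Y0 ω = y ∧ Y1 ω = ytilde} =
        P[|Z ⁻¹' {z}] {ω | Y0 ω = y ∧ Y1 ω = ytilde} by rw [← e2, key]]
    apply toReal_step
    intro ω hω
    simp only [Set.mem_setOf_eq] at hω
    by_cases hx : X ω = 0
    · left; exact ⟨by rw [hY ω, if_pos hx]; exact hω.1, hx⟩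
    · right
      have hx1 : X ω = 1 := (htwo (X ω)).resolve_left hx
      exact ⟨by rw [hY ω, if_neg hx]; exact hω.2, hx1⟩
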